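/- arXiv:math/0411018 — 10 statements merged into one kernel-verified Lean document; each statement's English description precedes it below -/
import Mathlib

section
/- For all real numbers D > 1 and t with 0 < t < 1, the inequality ((1-t)/t) * (D^t - 1)/(D - D^t) ≥ (log D)/(D - 1) holds. -/
open Real

/-- `sinh` is convex on `[0, ∞)`. -/
lemma convexOn_sinh_aux : ConvexOn ℝ (Set.Ici (0:ℝ)) Real.sinh := by
  have h2 : deriv^[2] Real.sinh = Real.sinh := by
    ext y
    rw [Function.iterate_succ_apply', Function.iterate_one, Real.deriv_sinh, Real.deriv_cosh]
  apply convexOn_of_deriv2_nonneg (convex_Ici 0) Real.continuous_sinh.continuousOn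
  · exact Real.differentiable_sinh.differentiableOn
  · rw [Real.deriv_sinh]
    exact Real.differentiable_cosh.differentiableOn
  · intro x hx
    rw [interior_Ici, Set.mem_Ioi] at hx
    rw [h2]
    exact (Real.sinh_pos_iff.mpr hx).le

/-- slope monotonicity: for `0 < x ≤ y`, `y * sinh x ≤ x * sinh y`. -/
lemma sinh_slope_mono {x y : ℝ} (hx : 0 < x) (hxy : x ≤ y) :
    y * Real.sinh x ≤ x * Real.sinh y := by
  have hy : 0 < y := hx.trans_le hxy
  have ha : (0:ℝ) ≤ 1 - x / y := by
    rw [sub_nonneg]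
    exact div_le_one_of_le₀ hxy hy.le
  have hb : (0:ℝ) ≤ x / y := by positivity
  have hab : (1 - x / y) + x / y = 1 := by ring
  have h2 := convexOn_sinh_aux.2 (Set.mem_Ici.mpr le_rfl) (Set.mem_Ici.mpr hy.le) ha hb hab
  have h1 : (1 - x / y) • (0:ℝ) + (x / y) • y = x := by
    field_simp
    simp only [smul_eq_mul, mul_zero, zero_add]
    exact div_mul_cancel₀ x hy.ne'
  rw [h1] at h2
  simp only [Real.sinh_zero, smul_eq_mul, mul_zero, zero_add] at h2
  have h3 := mul_le_mul_of_nonneg_left h2 hy.le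
  have h4 : y * (x / y * Real.sinh y) = x * Real.sinh y := by
    field_simp
  linarith [h3, h4.ge]

/-- Key inequality: for `0 < a < L`,
`a * L * (e^L - e^a) ≤ (e^a - 1) * (e^L - 1) * (L - a)`. -/
lemma key_ineq {a L : ℝ} (ha : 0 < a) (haL : a < L) :
    a * L * (Real.exp L - Real.exp a) ≤ (Real.exp a - 1) * (Real.exp L - 1) * (L - a) := by
  have hL : 0 < L := ha.trans haL
  set c := Real.exp (a/2) with hc
  set d := Real.exp ((L-a)/2) with hd
  have hcpos : 0 < c := Real.exp_pos _
  have hdpos : 0 < d := Real.exp_pos _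
  have hc0 : c ≠ 0 := hcpos.ne'
  have hd0 : d ≠ 0 := hdpos.ne'
  have hc1 : 1 < c := Real.one_lt_exp_iff.mpr (by linarith)
  have hd1 : 1 < d := Real.one_lt_exp_iff.mpr (by linarith)
  have hea : Real.exp a = c^2 := by
    rw [hc, sq, ← Real.exp_add]
    congr 1; ring
  have heL : Real.exp L = c^2 * d^2 := by
    rw [hc, hd, sq, sq, ← Real.exp_add, ← Real.exp_add, ← Real.exp_add]
    congr 1; ring
  -- sinh(a/2) ≥ a/2  gives  a*c ≤ c^2 - 1
  have hsinh_a : a/2 ≤ Real.sinh (a/2) := Real.self_le_sinh_iff.mpr (by linarith)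
  have hA : a * c ≤ c^2 - 1 := by
    rw [Real.sinh_eq] at hsinh_a
    have hinv : Real.exp (-(a/2)) = c⁻¹ := by rw [Real.exp_neg, hc]
    rw [hinv] at hsinh_a
    have e1 : c^2 - 1 = (c - c⁻¹)/2 * (2*c) := by field_simp
    have e2 : a * c = a/2 * (2*c) := by ring
    rw [e1, e2]
    exact mul_le_mul_of_nonneg_right hsinh_a (by positivity)
  -- slope: (L/2) * sinh((L-a)/2) ≤ ((L-a)/2) * sinh(L/2)
  have hB0 := sinh_slope_mono (x := (L-a)/2) (y := L/2) (by linarith) (by linarith)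
  have hB : L * c^2 * (d^2 - 1) ≤ (L - a) * c * (c^2 * d^2 - 1) := by
    rw [Real.sinh_eq, Real.sinh_eq] at hB0
    have hinv1 : Real.exp (-((L-a)/2)) = d⁻¹ := by rw [Real.exp_neg, hd]
    have hinv2 : Real.exp (-(L/2)) = (c*d)⁻¹ := by
      rw [Real.exp_neg]
      congr 1
      rw [hc, hd, ← Real.exp_add]
      congr 1; ring
    have heL2 : Real.exp (L/2) = c * d := by
      rw [hc, hd, ← Real.exp_add]
      congr 1; ring
    rw [hinv1, hinv2, heL2] at hB0
    have e1 : L * c^2 * (d^2 - 1) = L/2 * ((d - d⁻¹)/2) * (4*c^2*d) := by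
      field_simp; ring
    have e2 : (L - a) * c * (c^2 * d^2 - 1) =
        (L-a)/2 * ((c*d - (c*d)⁻¹)/2) * (4*c^2*d) := by
      field_simp; ring
    rw [e1, e2]
    exact mul_le_mul_of_nonneg_right hB0 (by positivity)
  -- combine
  rw [hea, heL]
  have h1 : 1 ≤ c^2 := by nlinarith
  have h2 : 1 ≤ d^2 := by nlinarith
  have h3 : 1 ≤ c^2 * d^2 := by nlinarith [h1, h2]
  have hfac : 0 ≤ (c^2 * d^2 - 1) * (L - a) :=
    mul_nonneg (by linarith) (by linarith)
  have step1 : a * (L * c^2 * (d^2 - 1)) ≤ a * ((L - a) * c * (c^2 * d^2 - 1)) :=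
    mul_le_mul_of_nonneg_left hB ha.le
  have step2 := mul_le_mul_of_nonneg_right hA hfac
  nlinarith [step1, step2]

theorem stmt_0 (D t : ℝ) (hD : 1 < D) (ht0 : 0 < t) (ht1 : t < 1) :
    (1 - t) / t * (D ^ t - 1) / (D - D ^ t) ≥ Real.log D / (D - 1) := by
  have hDpos : (0:ℝ) < D := by linarith
  have hL : 0 < Real.log D := Real.log_pos hD
  set L := Real.log D with hLdef
  have heL : Real.exp L = D := Real.exp_log hDpos
  have hea : Real.exp (t * L) = D ^ t := by
    rw [Real.rpow_def_of_pos hDpos, mul_comm]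
  have ha : 0 < t * L := by positivity
  have haL : t * L < L := by nlinarith
  have key := key_ineq ha haL
  rw [heL, hea] at key
  have hsub : 0 < D - D ^ t := by
    have : D ^ t < D ^ (1:ℝ) := Real.rpow_lt_rpow_of_exponent_lt hD ht1
    rw [Real.rpow_one] at this
    linarith
  rw [ge_iff_le, div_le_div_iff₀ (by linarith : (0:ℝ) < D - 1) hsub,
    div_mul_eq_mul_div, div_mul_eq_mul_div, le_div_iff₀ ht0]
  refine le_of_mul_le_mul_left ?_ hL
  calc L * (L * (D - D ^ t) * t) = t * L * L * (D - D ^ t) := by ring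
    _ ≤ (D ^ t - 1) * (D - 1) * (L - t * L) := key
    _ = L * ((1 - t) * (D ^ t - 1) * (D - 1)) := by ring
end

section
/- For all real γ > 0 and all t with 0 < t < 1, the inequality (1-t)*(exp(γ*t) - 1)*(exp(γ) - 1) - γ*t*(exp(γ) - exp(γ*t)) ≥ 0 holds. -/
open Real

lemma key_ineq_s1 {u : ℝ} (hu : 0 < u) : u ^ 2 * Real.exp u ≤ (Real.exp u - 1) ^ 2 := by
  have hs : u / 2 < Real.sinh (u / 2) := Real.self_lt_sinh_iff.mpr (by linarith)
  rw [Real.sinh_eq] at hs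
  set s := Real.exp (u / 2) with hsdef
  set r := Real.exp (-(u / 2)) with hrdef
  have hsr : s * r = 1 := by rw [hsdef, hrdef, ← Real.exp_add]; simp
  have hse : Real.exp u = s ^ 2 := by rw [hsdef, sq, ← Real.exp_add]; norm_num
  have hspos : 0 < s := Real.exp_pos _
  have hd : u < s - r := by linarith
  have hd0 : 0 < s - r := lt_trans hu hd
  have he : s ^ 2 - 1 = s * (s - r) := by rw [← hsr]; ring
  have hsq : u ^ 2 ≤ (s - r) ^ 2 := by nlinarith
  rw [hse, he]
  calc u ^ 2 * s ^ 2 ≤ (s - r) ^ 2 * s ^ 2 := by nlinarith [sq_nonneg s]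
    _ = (s * (s - r)) ^ 2 := by ring

lemma phi_hasDeriv {u : ℝ} (hu : 0 < u) :
    HasDerivAt (fun v : ℝ => v⁻¹ - (Real.exp v - 1)⁻¹)
      (-(u ^ 2)⁻¹ + Real.exp u / (Real.exp u - 1) ^ 2) u := by
  have hne : u ≠ 0 := ne_of_gt hu
  have hene : Real.exp u - 1 ≠ 0 := by
    have : 1 < Real.exp u := Real.one_lt_exp_iff.mpr hu
    linarith
  have h1 : HasDerivAt (fun v : ℝ => v⁻¹) (-(u ^ 2)⁻¹) u := by
    simpa using (hasDerivAt_inv hne)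
  have h2 : HasDerivAt (fun v : ℝ => Real.exp v - 1) (Real.exp u) u := by
    simpa using (Real.hasDerivAt_exp u).sub_const 1
  have h3 : HasDerivAt (fun v : ℝ => (Real.exp v - 1)⁻¹)
      (-(Real.exp u) / (Real.exp u - 1) ^ 2) u := by
    exact h2.inv hene
  have : HasDerivAt (fun v : ℝ => v⁻¹ - (Real.exp v - 1)⁻¹)
      (-(u ^ 2)⁻¹ - -(Real.exp u) / (Real.exp u - 1) ^ 2) u := h1.sub h3
  convert this using 1
  ring

lemma phi_anti : AntitoneOn (fun v : ℝ => v⁻¹ - (Real.exp v - 1)⁻¹) (Set.Ioi 0) := by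
  have hint : interior (Set.Ioi (0:ℝ)) = Set.Ioi 0 := interior_Ioi
  apply antitoneOn_of_deriv_nonpos (convex_Ioi 0)
  · intro u hu
    exact (phi_hasDeriv hu).continuousAt.continuousWithinAt
  · rw [hint]
    intro u hu
    exact (phi_hasDeriv hu).differentiableAt.differentiableWithinAt
  · rw [hint]
    intro u hu
    rw [(phi_hasDeriv hu).deriv]
    have hu : (0:ℝ) < u := hu
    have hene : (0:ℝ) < Real.exp u - 1 := by
      have : 1 < Real.exp u := Real.one_lt_exp_iff.mpr hu
      linarith
    have hk := key_ineq_s1 hu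
    have h : Real.exp u / (Real.exp u - 1) ^ 2 ≤ (u ^ 2)⁻¹ := by
      rw [div_le_iff₀ (by positivity), inv_mul_eq_div, le_div_iff₀ (by positivity)]
      nlinarith
    linarith

theorem stmt_1 (γ t : ℝ) (hγ : 0 < γ) (ht0 : 0 < t) (ht1 : t < 1) :
    (1 - t) * (Real.exp (γ * t) - 1) * (Real.exp γ - 1)
      - γ * t * (Real.exp γ - Real.exp (γ * t)) ≥ 0 := by
  set x := γ * t with hx
  set y := γ with hy
  have hx0 : 0 < x := mul_pos hγ ht0
  have hxy : x < y := by rw [hx, hy]; nlinarith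
  have hy0 : 0 < y := hγ
  have hex : 0 < Real.exp x - 1 := by
    have : 1 < Real.exp x := Real.one_lt_exp_iff.mpr hx0
    linarith
  have hey : 0 < Real.exp y - 1 := by
    have : 1 < Real.exp y := Real.one_lt_exp_iff.mpr hy0
    linarith
  have h := phi_anti (Set.mem_Ioi.mpr hx0) (Set.mem_Ioi.mpr hy0) hxy.le
  simp only at h
  have h2 : 0 ≤ (x⁻¹ - (Real.exp x - 1)⁻¹ - (y⁻¹ - (Real.exp y - 1)⁻¹))
      * (x * y * (Real.exp x - 1) * (Real.exp y - 1)) :=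
    mul_nonneg (by linarith) (by positivity)
  have h3 : (x⁻¹ - (Real.exp x - 1)⁻¹ - (y⁻¹ - (Real.exp y - 1)⁻¹))
      * (x * y * (Real.exp x - 1) * (Real.exp y - 1))
      = (y - x) * (Real.exp x - 1) * (Real.exp y - 1) - x * y * (Real.exp y - Real.exp x) := by
    field_simp
    ring
  rw [h3] at h2
  have h4 : γ * ((1 - t) * (Real.exp (γ * t) - 1) * (Real.exp γ - 1)
      - γ * t * (Real.exp γ - Real.exp (γ * t)))
      = (y - x) * (Real.exp x - 1) * (Real.exp y - 1) - x * y * (Real.exp y - Real.exp x) := by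
    rw [hx, hy]; ring
  have h5 : γ * 0 ≤ γ * ((1 - t) * (Real.exp (γ * t) - 1) * (Real.exp γ - 1)
      - γ * t * (Real.exp γ - Real.exp (γ * t))) := by
    rw [h4, mul_zero]; exact h2
  exact le_of_mul_le_mul_left (by simpa using h5) hγ
end

section
/- The function x(γ) = (exp(γ)*(γ-1) + 1)/(exp(γ)-1)^2, defined for γ > 0, takes values in the open interval (0, 1/2). -/
open Real

/- The numerator is positive because `exp (-γ) > 1 - γ`, and the bound `1/2` is, after clearing
denominators, the inequality `γ < sinh γ`. -/

lemma exp_mul_sub_one_add_one_pos {x : ℝ} (hx : x ≠ 0) : 0 < exp x * (x - 1) + 1 := by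
  have h : 1 - x < exp (-x) := by linarith [add_one_lt_exp (neg_ne_zero.mpr hx)]
  have : exp x * (1 - x) < 1 := by
    calc exp x * (1 - x) < exp x * exp (-x) := mul_lt_mul_of_pos_left h (exp_pos x)
      _ = 1 := by rw [← exp_add, add_neg_cancel, exp_zero]
  linarith

lemma two_mul_exp_mul_sub_one_add_one_lt_sq {x : ℝ} (hx : 0 < x) :
    2 * (exp x * (x - 1) + 1) < (exp x - 1) ^ 2 := by
  have hsinh : x < (exp x - exp (-x)) / 2 := by
    simpa only [sinh_eq] using self_lt_sinh_iff.mpr hx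
  have hmul : exp x * exp (-x) = 1 := by rw [← exp_add, add_neg_cancel, exp_zero]
  nlinarith [mul_lt_mul_of_pos_left hsinh (exp_pos x)]

theorem stmt_2 (γ : ℝ) (hγ : 0 < γ) :
    (Real.exp γ * (γ - 1) + 1) / (Real.exp γ - 1) ^ 2 ∈ Set.Ioo (0 : ℝ) (1 / 2) := by
  have hden : 0 < (exp γ - 1) ^ 2 := pow_pos (sub_pos.mpr (one_lt_exp_iff.mpr hγ)) 2
  constructor
  · exact div_pos (exp_mul_sub_one_add_one_pos hγ.ne') hden
  · rw [div_lt_div_iff₀ hden two_pos]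
    linarith [two_mul_exp_mul_sub_one_add_one_lt_sq hγ]
end

section
/- The function x(γ) = (exp(γ)*(γ-1) + 1)/(exp(γ)-1)^2, restricted to γ ∈ (0, ∞), is a bijection onto the interval (0, 1/2). -/
open Real Set Filter Topology

private lemma one_lt_exp' {γ : ℝ} (hγ : 0 < γ) : 1 < Real.exp γ := by
  simpa using Real.exp_lt_exp.2 hγ

private lemma hasDerivAt_N (x : ℝ) :
    HasDerivAt (fun x : ℝ => Real.exp x * (x - 1) + 1) (Real.exp x * x) x := by
  have h := ((Real.hasDerivAt_exp x).mul ((hasDerivAt_id x).sub_const 1)).add_const 1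
  refine h.congr_deriv ?_; simp only [id_eq]; ring

private lemma hasDerivAt_D (x : ℝ) :
    HasDerivAt (fun x : ℝ => (Real.exp x - 1) ^ 2) (2 * (Real.exp x - 1) * Real.exp x) x := by
  have h := ((Real.hasDerivAt_exp x).sub_const 1).pow 2
  refine h.congr_deriv ?_; norm_num

private lemma num_pos {γ : ℝ} (hγ : 0 < γ) : 0 < Real.exp γ * (γ - 1) + 1 := by
  have h : StrictMonoOn (fun x : ℝ => Real.exp x * (x - 1) + 1) (Ici 0) := by
    apply strictMonoOn_of_deriv_pos (convex_Ici 0)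
    · fun_prop
    · intro x hx
      rw [interior_Ici] at hx
      rw [(hasDerivAt_N x).deriv]
      exact mul_pos (Real.exp_pos x) hx
  have := h (mem_Ici.2 le_rfl) (mem_Ici.2 hγ.le) hγ
  simpa using this

private lemma k_pos {γ : ℝ} (hγ : 0 < γ) :
    0 < Real.exp γ ^ 2 - (2 * γ * Real.exp γ + 1) := by
  have h : StrictMonoOn (fun x : ℝ => Real.exp x ^ 2 - (2 * x * Real.exp x + 1)) (Ici 0) := by
    apply strictMonoOn_of_deriv_pos (convex_Ici 0)
    · fun_prop
    · intro x hx
      rw [interior_Ici] at hx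
      have hd : HasDerivAt (fun x : ℝ => Real.exp x ^ 2 - (2 * x * Real.exp x + 1))
          (2 * Real.exp x * (Real.exp x - 1 - x)) x := by
        have h1 := (Real.hasDerivAt_exp x).pow 2
        have h2 := (((hasDerivAt_id x).const_mul 2).mul (Real.hasDerivAt_exp x)).add_const 1
        have := h1.sub h2
        refine this.congr_deriv ?_; simp only [id_eq]; ring
      rw [hd.deriv]
      have h3 : x + 1 < Real.exp x := Real.add_one_lt_exp (ne_of_gt hx)
      have := Real.exp_pos x
      nlinarith
  have := h (mem_Ici.2 le_rfl) (mem_Ici.2 hγ.le) hγ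
  simpa using this

private lemma g_neg {γ : ℝ} (hγ : 0 < γ) :
    2 * Real.exp γ - 2 - γ * (Real.exp γ + 1) < 0 := by
  have h : StrictAntiOn (fun x : ℝ => 2 * Real.exp x - 2 - x * (Real.exp x + 1)) (Ici 0) := by
    apply strictAntiOn_of_deriv_neg (convex_Ici 0)
    · fun_prop
    · intro x hx
      rw [interior_Ici] at hx
      have hd : HasDerivAt (fun x : ℝ => 2 * Real.exp x - 2 - x * (Real.exp x + 1))
          (Real.exp x - 1 - x * Real.exp x) x := by
        have h1 := (((Real.hasDerivAt_exp x).const_mul 2).sub_const 2).sub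
          ((hasDerivAt_id x).mul ((Real.hasDerivAt_exp x).add_const 1))
        refine h1.congr_deriv ?_; simp only [id_eq]; ring
      rw [hd.deriv]
      -- exp x - 1 < x * exp x  ⟺  (1 - x) * exp x < 1  ⟸  1 - x < exp (-x)
      have h3 : -x + 1 < Real.exp (-x) := Real.add_one_lt_exp (by have hx' : 0 < x := hx; intro h; linarith)
      have h4 : (1 - x) * Real.exp x < Real.exp (-x) * Real.exp x := by
        have := Real.exp_pos x
        nlinarith
      rw [← Real.exp_add] at h4
      simp at h4
      nlinarith [Real.exp_pos x]
  have := h (mem_Ici.2 le_rfl) (mem_Ici.2 hγ.le) hγ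
  simpa using this

private lemma D_pos {γ : ℝ} (hγ : 0 < γ) : 0 < (Real.exp γ - 1) ^ 2 := by
  have := one_lt_exp' hγ
  have h : 0 < Real.exp γ - 1 := by linarith
  positivity

private lemma f_lt_half {γ : ℝ} (hγ : 0 < γ) :
    (Real.exp γ * (γ - 1) + 1) / (Real.exp γ - 1) ^ 2 < 1 / 2 := by
  rw [div_lt_iff₀ (D_pos hγ)]
  have := k_pos hγ
  nlinarith

private lemma f_pos {γ : ℝ} (hγ : 0 < γ) :
    0 < (Real.exp γ * (γ - 1) + 1) / (Real.exp γ - 1) ^ 2 :=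
  div_pos (num_pos hγ) (D_pos hγ)

private lemma f_contOn : ContinuousOn
    (fun γ : ℝ => (Real.exp γ * (γ - 1) + 1) / (Real.exp γ - 1) ^ 2) (Ioi 0) := by
  apply ContinuousOn.div
  · fun_prop
  · fun_prop
  · intro x hx
    exact ne_of_gt (D_pos hx)

private lemma f_strictAnti : StrictAntiOn
    (fun γ : ℝ => (Real.exp γ * (γ - 1) + 1) / (Real.exp γ - 1) ^ 2) (Ioi 0) := by
  apply strictAntiOn_of_deriv_neg (convex_Ioi 0) f_contOn
  intro x hx
  rw [interior_Ioi] at hx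
  have hD : (Real.exp x - 1) ^ 2 ≠ 0 := ne_of_gt (D_pos hx)
  have hd := (hasDerivAt_N x).div (hasDerivAt_D x) hD
  rw [show (fun γ : ℝ => (Real.exp γ * (γ - 1) + 1) / (Real.exp γ - 1) ^ 2) = (fun x => Real.exp x * (x - 1) + 1) / (fun x => (Real.exp x - 1) ^ 2) from rfl, hd.deriv]
  apply div_neg_of_neg_of_pos
  · have hfact : Real.exp x * x * (Real.exp x - 1) ^ 2 -
        (Real.exp x * (x - 1) + 1) * (2 * (Real.exp x - 1) * Real.exp x) =
        Real.exp x * (Real.exp x - 1) * (2 * Real.exp x - 2 - x * (Real.exp x + 1)) * (-1) * (-1) := by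
      ring
    rw [hfact]
    have h1 : 0 < Real.exp x * (Real.exp x - 1) :=
      mul_pos (Real.exp_pos x) (by have := one_lt_exp' hx; linarith)
    have h2 := g_neg hx
    nlinarith
  · positivity

private lemma tendsto_f_zero : Tendsto
    (fun γ : ℝ => (Real.exp γ * (γ - 1) + 1) / (Real.exp γ - 1) ^ 2)
    (𝓝[>] (0:ℝ)) (𝓝 (1/2)) := by
  apply HasDerivAt.lhopital_zero_nhdsGT
    (f' := fun x => Real.exp x * x) (g' := fun x => 2 * (Real.exp x - 1) * Real.exp x)
  · exact Eventually.of_forall hasDerivAt_N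
  · exact Eventually.of_forall hasDerivAt_D
  · filter_upwards [eventually_mem_nhdsWithin] with x hx
    have h1 : 1 < Real.exp x := one_lt_exp' hx
    have h2 : (0:ℝ) < Real.exp x := Real.exp_pos x
    have h3 : 0 < Real.exp x - 1 := by linarith
    positivity
  · have hc : Tendsto (fun γ : ℝ => Real.exp γ * (γ - 1) + 1) (𝓝 (0:ℝ))
        (𝓝 (Real.exp 0 * (0 - 1) + 1)) := Continuous.tendsto (by fun_prop) 0
    simp only [Real.exp_zero] at hc
    norm_num at hc
    exact hc.mono_left nhdsWithin_le_nhds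
  · have hc : Tendsto (fun γ : ℝ => (Real.exp γ - 1) ^ 2) (𝓝 (0:ℝ))
        (𝓝 ((Real.exp 0 - 1) ^ 2)) := Continuous.tendsto (by fun_prop) 0
    simp only [Real.exp_zero] at hc
    norm_num at hc
    exact hc.mono_left nhdsWithin_le_nhds
  · -- (x * exp x) / (2 (exp x - 1) exp x) = (1/2) * ((exp x - 1)/x)⁻¹ → 1/2
    have hslope : Tendsto (fun x : ℝ => (Real.exp x - 1) / x) (𝓝[>] (0:ℝ)) (𝓝 1) := by
      have h := Real.hasDerivAt_exp 0
      rw [hasDerivAt_iff_tendsto_slope] at h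
      have h2 := h.mono_left (nhdsWithin_mono (0:ℝ) (fun x hx => ne_of_gt hx))
      simp only [Real.exp_zero] at h2
      refine h2.congr' ?_
      filter_upwards [eventually_mem_nhdsWithin] with x hx
      simp [slope_def_field, Real.exp_zero]
    have h3 := (hslope.inv₀ one_ne_zero).const_mul (1/2 : ℝ)
    norm_num at h3
    refine h3.congr' ?_
    filter_upwards [eventually_mem_nhdsWithin] with x hx
    have hx1 : Real.exp x - 1 ≠ 0 := ne_of_gt (by have := one_lt_exp' hx; linarith)
    have hx0 : (x:ℝ) ≠ 0 := ne_of_gt hx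
    have he : Real.exp x ≠ 0 := Real.exp_ne_zero x
    field_simp

private lemma tendsto_f_atTop : Tendsto
    (fun γ : ℝ => (Real.exp γ * (γ - 1) + 1) / (Real.exp γ - 1) ^ 2)
    atTop (𝓝 0) := by
  apply squeeze_zero' (g := fun b => 4 * (b * Real.exp (-b)))
  · filter_upwards [eventually_gt_atTop (0:ℝ)] with b hb
    exact le_of_lt (f_pos hb)
  · filter_upwards [eventually_ge_atTop (1:ℝ)] with b hb
    have hb0 : (0:ℝ) < b := lt_of_lt_of_le one_pos hb
    have h2 : (2:ℝ) ≤ Real.exp b := by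
      have h1 : Real.exp 1 ≤ Real.exp b := Real.exp_le_exp.2 hb
      have := Real.add_one_le_exp (1:ℝ)
      linarith
    have hstep : (Real.exp b * (b - 1) + 1) / (Real.exp b - 1) ^ 2 ≤
        (b * Real.exp b) / ((Real.exp b / 2) ^ 2) := by
      apply div_le_div₀
      · positivity
      · nlinarith
      · positivity
      · apply pow_le_pow_left₀ (by positivity)
        linarith
    refine hstep.trans (le_of_eq ?_)
    rw [Real.exp_neg]
    have he : Real.exp b ≠ 0 := Real.exp_ne_zero b
    field_simp
    ring
  · have h := Real.tendsto_pow_mul_exp_neg_atTop_nhds_zero 1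
    simp only [pow_one] at h
    have := h.const_mul (4:ℝ)
    simpa using this

theorem stmt_4 :
    Set.BijOn (fun γ : ℝ => (Real.exp γ * (γ - 1) + 1) / (Real.exp γ - 1) ^ 2)
      (Set.Ioi (0 : ℝ)) (Set.Ioo (0 : ℝ) (1 / 2)) := by
  refine ⟨fun γ hγ => ⟨f_pos hγ, f_lt_half hγ⟩, f_strictAnti.injOn, ?_⟩
  intro y hy
  obtain ⟨hy0, hy2⟩ := hy
  -- find a near 0 with y < f a
  have h1 : ∀ᶠ x in 𝓝[>] (0:ℝ), y <
      (Real.exp x * (x - 1) + 1) / (Real.exp x - 1) ^ 2 :=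
    tendsto_f_zero (Ioi_mem_nhds hy2)
  obtain ⟨a, hya, ha⟩ := (h1.and eventually_mem_nhdsWithin).exists
  -- find b large with f b < y
  have h2 : ∀ᶠ x in atTop, (Real.exp x * (x - 1) + 1) / (Real.exp x - 1) ^ 2 < y :=
    tendsto_f_atTop (Iio_mem_nhds hy0)
  obtain ⟨b, hby, hab⟩ := (h2.and (eventually_gt_atTop a)).exists
  have hsub : Icc a b ⊆ Ioi 0 := fun x hx => lt_of_lt_of_le ha hx.1
  have := intermediate_value_Icc' (le_of_lt hab) (f_contOn.mono hsub)
  obtain ⟨c, hc, hfc⟩ := this ⟨le_of_lt hby, le_of_lt hya⟩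
  exact ⟨c, hsub hc, hfc⟩
end

section
/- For every γ > 0, letting x = (exp(γ)*(γ-1)+1)/(exp(γ)-1)^2, the function φ(s) = s*x + s/(exp(s)-1) defined for s > 0 attains its global minimum over s ∈ (0,∞) at s = γ. -/
open Real

private lemma pade_aux (γ : ℝ) (hγ : 0 < γ) :
    γ ^ 2 ≤ (γ - 1 + Real.exp (-γ)) * (2 + γ) := by
  set r : ℝ → ℝ := fun t => t - 2 + (2 + t) * Real.exp (-t) with hr
  have hder : ∀ t : ℝ, HasDerivAt r (1 - (1 + t) * Real.exp (-t)) t := by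
    intro t
    have h1 : HasDerivAt (fun u : ℝ => Real.exp (-u)) (-Real.exp (-t)) t := by
      simpa [Function.comp_def] using ((Real.hasDerivAt_exp (-t)).comp t ((hasDerivAt_id t).neg))
    have h2 : HasDerivAt (fun u : ℝ => (2 + u) * Real.exp (-u))
        (1 * Real.exp (-t) + (2 + t) * (-Real.exp (-t))) t :=
      ((hasDerivAt_id t).const_add 2).mul h1
    have h3 : HasDerivAt r
        (1 + (1 * Real.exp (-t) + (2 + t) * (-Real.exp (-t)))) t :=
      ((hasDerivAt_id t).sub_const 2).add h2
    have heq : 1 + (1 * Real.exp (-t) + (2 + t) * (-Real.exp (-t)))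
        = 1 - (1 + t) * Real.exp (-t) := by ring
    rw [heq] at h3; exact h3
  have hmono : MonotoneOn r (Set.Ici (0 : ℝ)) := by
    apply monotoneOn_of_deriv_nonneg (convex_Ici 0)
    · exact Continuous.continuousOn
        (continuous_iff_continuousAt.2 fun t => (hder t).continuousAt)
    · intro t _
      exact (hder t).differentiableAt.differentiableWithinAt
    · intro t ht
      rw [(hder t).deriv]
      have ht' : 0 < t := by simpa using ht
      have h4 : (1 + t) * Real.exp (-t) ≤ 1 := by
        rw [Real.exp_neg, mul_inv_le_iff₀ (Real.exp_pos t)]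
        simpa [add_comm] using (Real.add_one_le_exp t)
      linarith
  have h0 : r 0 = 0 := by simp [hr]
  have hrγ : 0 ≤ r γ := by
    have := hmono Set.self_mem_Ici (Set.mem_Ici.2 hγ.le) hγ.le
    rw [h0] at this; exact this
  have hrγ' : 0 ≤ γ - 2 + (2 + γ) * Real.exp (-γ) := hrγ
  nlinarith [hrγ']

private lemma key_nonneg (γ : ℝ) (hγ : 0 < γ) (s : ℝ) (hs : 0 ≤ s) :
    0 ≤ (γ - 1 + Real.exp (-γ)) * s * Real.exp s + (Real.exp γ - γ - 1) * s
        - γ ^ 2 * Real.exp s + γ ^ 2 := by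
  set p : ℝ := γ - 1 + Real.exp (-γ) with hp_def
  set q : ℝ := Real.exp γ - γ - 1 with hq_def
  have hp : 0 < p := by
    have := Real.add_one_lt_exp (x := -γ) (by simpa using hγ.ne')
    simp only [hp_def]; linarith
  have hq : 0 < q := by
    have := Real.add_one_lt_exp (x := γ) hγ.ne'
    simp only [hq_def]; linarith
  set K : ℝ → ℝ := fun t => p * (t * Real.exp t) + q * t - γ ^ 2 * Real.exp t + γ ^ 2
    with hK_def
  set K1 : ℝ → ℝ := fun t => p * (Real.exp t * (1 + t)) + q - γ ^ 2 * Real.exp t with hK1_def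
  set K2 : ℝ → ℝ := fun t => Real.exp t * (p * (2 + t) - γ ^ 2) with hK2_def
  have hKder : ∀ t : ℝ, HasDerivAt K (K1 t) t := by
    intro t
    have h1 : HasDerivAt (fun u : ℝ => u * Real.exp u) (1 * Real.exp t + t * Real.exp t) t :=
      (hasDerivAt_id t).mul (Real.hasDerivAt_exp t)
    have hq1 : HasDerivAt (fun u : ℝ => q * u) q t := by
      simpa using (hasDerivAt_id t).const_mul q
    have h2 := (((h1.const_mul p).add hq1).sub
      ((Real.hasDerivAt_exp t).const_mul (γ ^ 2))).add_const (γ ^ 2)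
    have heq : p * (1 * Real.exp t + t * Real.exp t) + q - γ ^ 2 * Real.exp t = K1 t := by
      simp only [hK1_def]; ring
    rw [heq] at h2
    exact h2
  have hK1der : ∀ t : ℝ, HasDerivAt K1 (K2 t) t := by
    intro t
    have h1 : HasDerivAt (fun u : ℝ => Real.exp u * (1 + u))
        (Real.exp t * (1 + t) + Real.exp t * 1) t :=
      (Real.hasDerivAt_exp t).mul ((hasDerivAt_id t).const_add 1)
    have h2 := ((h1.const_mul p).add_const q).sub ((Real.hasDerivAt_exp t).const_mul (γ ^ 2))
    have heq : p * (Real.exp t * (1 + t) + Real.exp t * 1) - γ ^ 2 * Real.exp t = K2 t := by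
      simp only [hK2_def]; ring
    rw [heq] at h2
    exact h2
  have hexpγ : Real.exp (-γ) * Real.exp γ = 1 := by
    rw [← Real.exp_add]; simp
  have hKγ : K γ = 0 := by
    simp only [hK_def, hp_def, hq_def]
    nlinarith [hexpγ]
  have hK1γ : K1 γ = 0 := by
    simp only [hK1_def, hp_def, hq_def]
    nlinarith [hexpγ]
  have hK0 : K 0 = 0 := by simp [hK_def]
  set m : ℝ := γ ^ 2 / p - 2 with hm_def
  have hmγ : m ≤ γ := by
    have h := pade_aux γ hγ
    rw [hm_def, sub_le_iff_le_add, div_le_iff₀ hp]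
    simp only [hp_def] at h ⊢
    nlinarith [h]
  have hK2nonneg : ∀ t : ℝ, m ≤ t → 0 ≤ K2 t := by
    intro t ht
    have h5 : γ ^ 2 ≤ p * (2 + t) := by
      rw [hm_def] at ht
      have h6 : γ ^ 2 / p ≤ 2 + t := by linarith
      calc γ ^ 2 = p * (γ ^ 2 / p) := by field_simp
        _ ≤ p * (2 + t) := mul_le_mul_of_nonneg_left h6 hp.le
    have := Real.exp_pos t
    simp only [hK2_def]; nlinarith
  have hK2nonpos : ∀ t : ℝ, t ≤ m → K2 t ≤ 0 := by
    intro t ht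
    have h5 : p * (2 + t) ≤ γ ^ 2 := by
      rw [hm_def] at ht
      have h6 : 2 + t ≤ γ ^ 2 / p := by linarith
      calc p * (2 + t) ≤ p * (γ ^ 2 / p) := mul_le_mul_of_nonneg_left h6 hp.le
        _ = γ ^ 2 := by field_simp
    have := Real.exp_pos t
    simp only [hK2_def]; nlinarith
  have hK1cont : Continuous K1 :=
    continuous_iff_continuousAt.2 fun t => (hK1der t).continuousAt
  have hKcont : Continuous K :=
    continuous_iff_continuousAt.2 fun t => (hKder t).continuousAt
  have hK1mono : MonotoneOn K1 (Set.Ici m) := by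
    apply monotoneOn_of_deriv_nonneg (convex_Ici m) hK1cont.continuousOn
    · intro t _; exact (hK1der t).differentiableAt.differentiableWithinAt
    · intro t ht
      rw [(hK1der t).deriv]
      exact hK2nonneg t (le_of_lt (by simpa using ht))
  have hKmono : MonotoneOn K (Set.Ici γ) := by
    apply monotoneOn_of_deriv_nonneg (convex_Ici γ) hKcont.continuousOn
    · intro t _; exact (hKder t).differentiableAt.differentiableWithinAt
    · intro t ht
      rw [(hKder t).deriv]
      have ht' : γ < t := by simpa using ht
      have h7 := hK1mono (Set.mem_Ici.2 hmγ) (Set.mem_Ici.2 (hmγ.trans ht'.le)) ht'.le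
      rw [hK1γ] at h7; exact h7
  have hKanti : AntitoneOn K (Set.Icc m γ) := by
    apply antitoneOn_of_deriv_nonpos (convex_Icc m γ) hKcont.continuousOn
    · intro t _; exact (hKder t).differentiableAt.differentiableWithinAt
    · intro t ht
      rw [(hKder t).deriv]
      rw [interior_Icc] at ht
      have h7 := hK1mono (Set.mem_Ici.2 ht.1.le) (Set.mem_Ici.2 hmγ) ht.2.le
      rw [hK1γ] at h7; exact h7
  have hKm_nonneg : ∀ t : ℝ, m ≤ t → t ≤ γ → 0 ≤ K t := by
    intro t h1 h2
    have h8 := hKanti (Set.mem_Icc.2 ⟨h1, h2⟩) (Set.mem_Icc.2 ⟨hmγ, le_refl γ⟩) h2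
    rw [hKγ] at h8; exact h8
  have main : 0 ≤ K s := by
    rcases le_or_gt γ s with hcase | hcase
    · have h9 := hKmono (Set.mem_Ici.2 (le_refl γ)) (Set.mem_Ici.2 hcase) hcase
      rw [hKγ] at h9; exact h9
    · rcases le_or_gt m s with hcase2 | hcase2
      · exact hKm_nonneg s hcase2 hcase.le
      · have hm0 : 0 < m := lt_of_le_of_lt hs hcase2
        have hconc : ConcaveOn ℝ (Set.Icc 0 m) K := by
          apply concaveOn_of_hasDerivWithinAt2_nonpos (convex_Icc 0 m) hKcont.continuousOn
            (f' := K1) (f'' := K2)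
          · intro t _; exact (hKder t).hasDerivWithinAt
          · intro t _; exact (hK1der t).hasDerivWithinAt
          · intro t ht
            rw [interior_Icc] at ht
            exact hK2nonpos t ht.2.le
        have hKm : 0 ≤ K m := hKm_nonneg m (le_refl m) hmγ
        have hw1 : (0:ℝ) ≤ (m - s) / m := div_nonneg (by linarith) hm0.le
        have hw2 : (0:ℝ) ≤ s / m := div_nonneg hs hm0.le
        have hw3 : (m - s) / m + s / m = 1 := by field_simp; ring
        have hcomb := hconc.2 (Set.mem_Icc.2 ⟨le_refl 0, hm0.le⟩)
          (Set.mem_Icc.2 ⟨hm0.le, le_refl m⟩) hw1 hw2 hw3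
        have heq : ((m - s) / m) • (0:ℝ) + (s / m) • m = s := by
          simp only [smul_eq_mul, mul_zero, zero_add]
          field_simp
        rw [heq, hK0] at hcomb
        simp only [smul_eq_mul, mul_zero, zero_add] at hcomb
        have hs' : 0 ≤ s / m * K m := mul_nonneg hw2 hKm
        exact le_trans hs' hcomb
  have heq2 : p * s * Real.exp s + q * s - γ ^ 2 * Real.exp s + γ ^ 2 = K s := by
    simp only [hK_def]; ring
  rw [heq2]
  exact main

theorem stmt_7 (γ : ℝ) (hγ : 0 < γ)
    (x : ℝ) (hx : x = (Real.exp γ * (γ - 1) + 1) / (Real.exp γ - 1) ^ 2) :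
    ∀ s : ℝ, 0 < s →
      s * x + s / (Real.exp s - 1) ≥ γ * x + γ / (Real.exp γ - 1) := by
  intro s hs
  have hK := key_nonneg γ hγ s hs.le
  have ha : 1 < Real.exp γ := Real.one_lt_exp_iff.2 hγ
  have hb : 1 < Real.exp s := Real.one_lt_exp_iff.2 hs
  have ha' : Real.exp γ - 1 ≠ 0 := by linarith
  have hb' : (0:ℝ) < Real.exp s - 1 := by linarith
  have hexpγ : Real.exp (-γ) = (Real.exp γ)⁻¹ := Real.exp_neg γ
  have hid : s * x + s / (Real.exp s - 1) - (γ * x + γ / (Real.exp γ - 1))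
      = Real.exp γ * ((γ - 1 + Real.exp (-γ)) * s * Real.exp s + (Real.exp γ - γ - 1) * s
        - γ ^ 2 * Real.exp s + γ ^ 2) / ((Real.exp s - 1) * (Real.exp γ - 1) ^ 2) := by
    rw [hx, hexpγ]
    have he : Real.exp γ ≠ 0 := (Real.exp_pos γ).ne'
    field_simp
    ring
  have hfrac : 0 ≤ Real.exp γ * ((γ - 1 + Real.exp (-γ)) * s * Real.exp s
      + (Real.exp γ - γ - 1) * s - γ ^ 2 * Real.exp s + γ ^ 2)
      / ((Real.exp s - 1) * (Real.exp γ - 1) ^ 2) := by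
    apply div_nonneg
    · exact mul_nonneg (Real.exp_pos γ).le hK
    · positivity
  linarith [hid ▸ hfrac]
end

section
/- The derivative with respect to γ of the function γ ↦ γ²*exp(γ)/(exp(γ)-1)² equals γ times the derivative with respect to γ of the function γ ↦ (exp(γ)*(γ-1)+1)/(exp(γ)-1)², for every γ > 0. -/
theorem stmt_9 (γ : ℝ) (hγ : 0 < γ) :
    deriv (fun s : ℝ => s ^ 2 * Real.exp s / (Real.exp s - 1) ^ 2) γ
      = γ * deriv (fun s : ℝ => (Real.exp s * (s - 1) + 1) / (Real.exp s - 1) ^ 2) γ := by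
  have he : Real.exp γ - 1 ≠ 0 := by
    nlinarith [Real.add_one_lt_exp hγ.ne']
  have hv : HasDerivAt (fun s : ℝ => (Real.exp s - 1) ^ 2)
      (2 * (Real.exp γ - 1) * Real.exp γ) γ := by
    have := (((Real.hasDerivAt_exp γ).sub_const 1).pow 2)
    refine this.congr_deriv ?_; ring
  have hu1 : HasDerivAt (fun s : ℝ => s ^ 2 * Real.exp s)
      (2 * γ * Real.exp γ + γ ^ 2 * Real.exp γ) γ := by
    have := (hasDerivAt_pow 2 γ).mul (Real.hasDerivAt_exp γ)
    refine this.congr_deriv ?_; push_cast; ring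
  have hu2 : HasDerivAt (fun s : ℝ => Real.exp s * (s - 1) + 1)
      (Real.exp γ * γ) γ := by
    have := ((Real.hasDerivAt_exp γ).mul ((hasDerivAt_id γ).sub_const 1)).add_const 1
    refine this.congr_deriv ?_; simp [id]; ring
  have hvne : ((Real.exp γ - 1) ^ 2 : ℝ) ≠ 0 := pow_ne_zero _ he
  have h1 : deriv (fun s : ℝ => s ^ 2 * Real.exp s / (Real.exp s - 1) ^ 2) γ = _ := (hu1.div hv hvne).deriv
  have h2 : deriv (fun s : ℝ => (Real.exp s * (s - 1) + 1) / (Real.exp s - 1) ^ 2) γ = _ := (hu2.div hv hvne).deriv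
  rw [h1, h2]
  field_simp
  ring
end

section
/- For s > 0 and x real, the derivative of φ(s) = s*x + s/(exp(s)-1) with respect to s is x + (exp(s) - 1 - s*exp(s))/(exp(s)-1)², and the function s ↦ (exp(s) - 1 - s*exp(s))/(exp(s)-1)² is strictly increasing on (0,∞). -/
lemma lemA {s : ℝ} (hs : 0 < s) : 0 < s * Real.exp s - Real.exp s + 1 := by
  have h := Real.add_one_lt_exp (x := -s) (by linarith)
  have he : Real.exp (-s) * Real.exp s = 1 := by
    rw [← Real.exp_add]; simp
  nlinarith [mul_lt_mul_of_pos_right h (Real.exp_pos s)]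

lemma lemB {s : ℝ} (hs : 0 < s) : 0 < s * (Real.exp s + 1) - 2 * (Real.exp s - 1) := by
  have hderiv : ∀ t : ℝ, HasDerivAt
      (fun t : ℝ => t * (Real.exp t + 1) - 2 * (Real.exp t - 1))
      (t * Real.exp t - Real.exp t + 1) t := by
    intro t
    have h1 : HasDerivAt (fun t : ℝ => t * (Real.exp t + 1))
        (1 * (Real.exp t + 1) + t * Real.exp t) t :=
      (hasDerivAt_id t).mul ((Real.hasDerivAt_exp t).add_const 1)
    have h2 : HasDerivAt (fun t : ℝ => 2 * (Real.exp t - 1)) (2 * Real.exp t) t := by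
      simpa using ((Real.hasDerivAt_exp t).sub_const 1).const_mul 2
    have := h1.sub h2
    refine this.congr_deriv ?_
    ring
  have hmono : StrictMonoOn (fun t : ℝ => t * (Real.exp t + 1) - 2 * (Real.exp t - 1))
      (Set.Ici 0) := by
    apply strictMonoOn_of_deriv_pos (convex_Ici 0)
    · exact fun t _ => (hderiv t).differentiableAt.continuousAt.continuousWithinAt
    · intro t ht
      rw [interior_Ici] at ht
      rw [(hderiv t).deriv]
      exact lemA ht
  have := hmono Set.self_mem_Ici (Set.mem_Ici.2 hs.le) hs
  simpa using this

lemma exp_sub_one_pos {s : ℝ} (hs : 0 < s) : 0 < Real.exp s - 1 := by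
  have := Real.add_one_lt_exp (ne_of_gt hs)
  linarith

theorem stmt_10 (x : ℝ) :
    (∀ s : ℝ, 0 < s →
      HasDerivAt (fun s : ℝ => s * x + s / (Real.exp s - 1))
        (x + (Real.exp s - 1 - s * Real.exp s) / (Real.exp s - 1) ^ 2) s) ∧
    StrictMonoOn (fun s : ℝ => (Real.exp s - 1 - s * Real.exp s) / (Real.exp s - 1) ^ 2)
      (Set.Ioi (0 : ℝ)) := by
  constructor
  · intro s hs
    have hne : Real.exp s - 1 ≠ 0 := ne_of_gt (exp_sub_one_pos hs)
    have h1 : HasDerivAt (fun s : ℝ => s * x) x s := by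
      simpa using (hasDerivAt_id s).mul_const x
    have hden : HasDerivAt (fun s : ℝ => Real.exp s - 1) (Real.exp s) s :=
      (Real.hasDerivAt_exp s).sub_const 1
    have h2 : HasDerivAt (fun s : ℝ => s / (Real.exp s - 1))
        ((1 * (Real.exp s - 1) - s * Real.exp s) / (Real.exp s - 1) ^ 2) s :=
      (hasDerivAt_id s).div hden hne
    have := h1.add h2
    refine this.congr_deriv ?_
    ring
  · have hderiv : ∀ s : ℝ, 0 < s →
        HasDerivAt (fun s : ℝ => (Real.exp s - 1 - s * Real.exp s) / (Real.exp s - 1) ^ 2)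
          (((-(s * Real.exp s)) * (Real.exp s - 1) ^ 2 -
            (Real.exp s - 1 - s * Real.exp s) * ((2 : ℕ) * (Real.exp s - 1) ^ 1 * Real.exp s)) /
            ((Real.exp s - 1) ^ 2) ^ 2) s := by
      intro s hs
      have hne : (Real.exp s - 1) ^ 2 ≠ 0 := pow_ne_zero _ (ne_of_gt (exp_sub_one_pos hs))
      have hden : HasDerivAt (fun s : ℝ => Real.exp s - 1) (Real.exp s) s :=
        (Real.hasDerivAt_exp s).sub_const 1
      have hnum : HasDerivAt (fun s : ℝ => Real.exp s - 1 - s * Real.exp s)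
          (-(s * Real.exp s)) s := by
        have := hden.sub ((hasDerivAt_id s).mul (Real.hasDerivAt_exp s))
        refine this.congr_deriv ?_
        simp [id_eq]; try ring
      exact hnum.div (hden.pow 2) hne
    apply strictMonoOn_of_deriv_pos (convex_Ioi 0)
    · exact fun t ht => (hderiv t ht).differentiableAt.continuousAt.continuousWithinAt
    · intro t ht
      rw [interior_Ioi] at ht
      rw [(hderiv t ht).deriv]
      apply div_pos
      · have h1 := exp_sub_one_pos ht
        have h2 := Real.exp_pos t
        have h3 := lemB ht
        push_cast
        nlinarith [mul_pos (mul_pos h1 h2) h3]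
      · exact pow_pos (pow_pos (exp_sub_one_pos ht) 2) 2
end

section
/- As γ → ∞, the ratio of G(γ) := γ²*exp(γ)/(exp(γ)*(γ-1)+1) to log(1/x(γ)), where x(γ) = (exp(γ)*(γ-1)+1)/(exp(γ)-1)², tends to 1. -/
open Filter Real

theorem stmt_13 :
    Filter.Tendsto (fun γ : ℝ =>
      (γ ^ 2 * Real.exp γ / (Real.exp γ * (γ - 1) + 1)) /
        Real.log (1 / ((Real.exp γ * (γ - 1) + 1) / (Real.exp γ - 1) ^ 2)))
      Filter.atTop (nhds 1) := by
  -- g γ = (γ - 1 + exp(-γ))/γ → 1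
  have hg : Tendsto (fun γ : ℝ => (γ - 1 + Real.exp (-γ)) / γ) atTop (nhds 1) := by
    have h1 : Tendsto (fun γ : ℝ => 1 - 1/γ + Real.exp (-γ) * (1/γ)) atTop (nhds 1) := by
      have := ((tendsto_const_nhds (x := (1:ℝ))).sub tendsto_inv_atTop_zero).add
        (Real.tendsto_exp_neg_atTop_nhds_zero.mul tendsto_inv_atTop_zero)
      simpa using this
    refine h1.congr' ?_
    filter_upwards [eventually_gt_atTop (0:ℝ)] with γ hγ
    field_simp
  -- f γ = γ - 1 + exp(-γ) → atTop
  have hf : Tendsto (fun γ : ℝ => γ - 1 + Real.exp (-γ)) atTop atTop :=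
    Filter.Tendsto.atTop_add_nonneg (tendsto_atTop_add_const_right _ (-1) tendsto_id |>.congr
      (fun x => by simp [sub_eq_add_neg])) (fun x => (Real.exp_pos _).le)
  -- positivity facts, eventually
  have hev : ∀ᶠ γ : ℝ in atTop, (1:ℝ) < γ := eventually_gt_atTop 1
  -- A : numerator / γ → 1
  have hA : Tendsto (fun γ : ℝ => (γ ^ 2 * Real.exp γ / (Real.exp γ * (γ - 1) + 1)) / γ)
      atTop (nhds 1) := by
    have h1 : Tendsto (fun γ : ℝ => 1 / ((γ - 1 + Real.exp (-γ)) / γ)) atTop (nhds 1) := by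
      have h := (tendsto_const_nhds (x := (1:ℝ))).div hg one_ne_zero
      rw [show (1:ℝ)/1 = 1 by norm_num] at h
      exact h
    refine h1.congr' ?_
    filter_upwards [hev] with γ hγ
    have hγ0 : γ ≠ 0 := by linarith
    have hfpos : 0 < γ - 1 + Real.exp (-γ) := by
      have := Real.exp_pos (-γ); linarith
    have hP : Real.exp γ * (γ - 1) + 1 = Real.exp γ * (γ - 1 + Real.exp (-γ)) := by
      rw [mul_add, ← Real.exp_add]; simp
    rw [hP]
    have hE : Real.exp γ ≠ 0 := (Real.exp_pos γ).ne'
    field_simp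
  -- B : log(1/x)/γ → 1
  have hB : Tendsto (fun γ : ℝ =>
      Real.log (1 / ((Real.exp γ * (γ - 1) + 1) / (Real.exp γ - 1) ^ 2)) / γ)
      atTop (nhds 1) := by
    -- piece 1 : log(1 - exp(-γ)) * (1/γ) → 0
    have hb1 : Tendsto (fun γ : ℝ => Real.log (1 - Real.exp (-γ)) * (1/γ)) atTop (nhds 0) := by
      have harg : Tendsto (fun γ : ℝ => 1 - Real.exp (-γ)) atTop (nhds 1) := by
        have := (tendsto_const_nhds (x := (1:ℝ))).sub Real.tendsto_exp_neg_atTop_nhds_zero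
        simpa using this
      have hlog : Tendsto (fun γ : ℝ => Real.log (1 - Real.exp (-γ))) atTop (nhds 0) := by
        have := (Real.continuousAt_log one_ne_zero).tendsto.comp harg
        simpa [Function.comp_def] using this
      simpa using hlog.mul tendsto_inv_atTop_zero
    -- piece 2 : log(f γ)/γ → 0
    have hb2 : Tendsto (fun γ : ℝ => Real.log (γ - 1 + Real.exp (-γ)) / γ) atTop (nhds 0) := by
      have hlf : Tendsto (fun x : ℝ => Real.log x / x) atTop (nhds 0) :=
        Real.isLittleO_log_id_atTop.tendsto_div_nhds_zero
      have h1 : Tendsto (fun γ : ℝ =>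
          (Real.log (γ - 1 + Real.exp (-γ)) / (γ - 1 + Real.exp (-γ))) *
            ((γ - 1 + Real.exp (-γ)) / γ)) atTop (nhds 0) := by
        have := (hlf.comp hf).mul hg
        simpa using this
      refine h1.congr' ?_
      filter_upwards [hev] with γ hγ
      have hγ0 : γ ≠ 0 := by linarith
      have hfpos : 0 < γ - 1 + Real.exp (-γ) := by
        have := Real.exp_pos (-γ); linarith
      field_simp
    have hdec : Tendsto (fun γ : ℝ =>
        1 + 2 * (Real.log (1 - Real.exp (-γ)) * (1/γ)) -
          Real.log (γ - 1 + Real.exp (-γ)) / γ) atTop (nhds 1) := by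
      have := ((tendsto_const_nhds (x := (1:ℝ))).add ((tendsto_const_nhds (x := (2:ℝ))).mul hb1)).sub hb2
      simpa using this
    refine hdec.congr' ?_
    filter_upwards [hev] with γ hγ
    have hγ0 : γ ≠ 0 := by linarith
    have hγpos : (0:ℝ) < γ := by linarith
    have hfpos : 0 < γ - 1 + Real.exp (-γ) := by
      have := Real.exp_pos (-γ); linarith
    have hepos : (0:ℝ) < 1 - Real.exp (-γ) := by
      have : Real.exp (-γ) < 1 := by
        rw [Real.exp_lt_one_iff]; linarith
      linarith
    have hQpos : (0:ℝ) < Real.exp γ - 1 := by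
      have : (1:ℝ) < Real.exp γ := by
        rw [Real.one_lt_exp_iff]; linarith
      linarith
    have hPpos : (0:ℝ) < Real.exp γ * (γ - 1) + 1 := by
      have hE := Real.exp_pos γ
      nlinarith
    have hP : Real.exp γ * (γ - 1) + 1 = Real.exp γ * (γ - 1 + Real.exp (-γ)) := by
      rw [mul_add, ← Real.exp_add]; simp
    have hQ : Real.exp γ - 1 = Real.exp γ * (1 - Real.exp (-γ)) := by
      rw [mul_sub, ← Real.exp_add]; simp
    have hlogP : Real.log (Real.exp γ * (γ - 1) + 1) =
        γ + Real.log (γ - 1 + Real.exp (-γ)) := by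
      rw [hP, Real.log_mul (Real.exp_pos γ).ne' hfpos.ne', Real.log_exp]
    have hlogQ : Real.log (Real.exp γ - 1) = γ + Real.log (1 - Real.exp (-γ)) := by
      rw [hQ, Real.log_mul (Real.exp_pos γ).ne' hepos.ne', Real.log_exp]
    rw [one_div_div, Real.log_div (pow_ne_zero 2 hQpos.ne') hPpos.ne',
      Real.log_pow, hlogP, hlogQ]
    push_cast
    field_simp
    ring
  have := hA.div hB one_ne_zero
  rw [div_one] at this
  refine this.congr' ?_
  filter_upwards [hev] with γ hγ
  have hγ0 : γ ≠ 0 := by linarith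
  simp only [Pi.div_apply]
  rw [div_div_div_comm, div_self hγ0, div_one]
end

section
/- For every integer n ≥ 2 and every real γ ≥ 1, with x = ((1+γ)^(n-1)*(γ*(n-1) - 1) + 1)/(((1+γ)^(n-1) - 1)*((1+γ)^n - 1)), the inequality (γ*n/((1+γ)^n - 1)) * (x*((1+γ)^n - 1))^(1 - 1/n) ≥ (n/2) * x^(1 - 1/n) holds. -/
/-!
Writing `A = (1 + γ)^n - 1` and `e = 1 - 1/n`, the left-hand side equals `γ n x^e / A^(1/n)`,
once `x ≥ 0` allows splitting `(x A)^e = x^e A^e`. So the inequality reduces to `A^(1/n) ≤ 2γ`,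
which holds because `A < (1 + γ)^n` and `1 + γ ≤ 2γ`.
-/

namespace Real

lemma div_mul_mul_rpow_one_sub {x A : ℝ} (hx : 0 ≤ x) (hA : 0 < A) (c p : ℝ) :
    c / A * (x * A) ^ (1 - p) = c / A ^ p * x ^ (1 - p) := by
  rw [mul_rpow hx hA.le, rpow_sub hA, rpow_one]
  field_simp

lemma rpow_inv_natCast_le_of_le_pow {a b : ℝ} (ha : 0 ≤ a) (hb : 0 ≤ b) {n : ℕ} (hn : n ≠ 0)
    (hab : a ≤ b ^ n) : a ^ (n⁻¹ : ℝ) ≤ b :=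
  calc a ^ (n⁻¹ : ℝ) ≤ (b ^ n) ^ (n⁻¹ : ℝ) := by gcongr
    _ = b := pow_rpow_inv_natCast hb hn

end Real

theorem stmt_15 (n : ℕ) (hn : 2 ≤ n) (γ : ℝ) (hγ : 1 ≤ γ)
    (x : ℝ)
    (hx : x = ((1 + γ) ^ (n - 1) * (γ * ((n : ℝ) - 1) - 1) + 1)
        / (((1 + γ) ^ (n - 1) - 1) * ((1 + γ) ^ n - 1))) :
    γ * n / ((1 + γ) ^ n - 1) * (x * ((1 + γ) ^ n - 1)) ^ ((1 : ℝ) - 1 / n)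
      ≥ (n / 2) * x ^ ((1 : ℝ) - 1 / n) := by
  have hn1 : (2 : ℝ) ≤ n := by exact_mod_cast hn
  have hA : 0 < (1 + γ) ^ n - 1 := sub_pos.2 (one_lt_pow₀ (by linarith) (by omega))
  have hx0 : 0 ≤ x := by
    have hγn : 1 ≤ γ * ((n : ℝ) - 1) := one_le_mul_of_one_le_of_one_le hγ (by linarith)
    have hA' : 0 ≤ (1 + γ) ^ (n - 1) - 1 := sub_nonneg.2 (one_le_pow₀ (by linarith))
    rw [hx]
    exact div_nonneg (by positivity [sub_nonneg.2 hγn]) (mul_nonneg hA' hA.le)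
  have hroot : ((1 + γ) ^ n - 1) ^ ((1 : ℝ) / n) ≤ 2 * γ := by
    rw [one_div]
    calc _ ≤ 1 + γ := Real.rpow_inv_natCast_le_of_le_pow hA.le (by linarith) (by omega)
          (by linarith)
      _ ≤ 2 * γ := by linarith
  rw [ge_iff_le, Real.div_mul_mul_rpow_one_sub hx0 hA]
  refine mul_le_mul_of_nonneg_right ?_ (Real.rpow_nonneg hx0 _)
  rw [le_div_iff₀ (Real.rpow_pos_of_pos hA _)]
  nlinarith
end

section
/- As γ → ∞, the expression (γ / ((1+γ)^n - 1)^(1/n)) * ((1+γ)^(n-1)*γ*(n-1) / ((1+γ)^(n-1)*(γ*(n-1) - 1) + 1))^(1 - 1/n) tends to 1, for any fixed integer n ≥ 2. -/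
open Filter Real

theorem stmt_19 (n : ℕ) (hn : 2 ≤ n) :
    Filter.Tendsto (fun γ : ℝ =>
      γ / ((1 + γ) ^ n - 1) ^ ((1 : ℝ) / n) *
        ((1 + γ) ^ (n - 1) * γ * ((n : ℝ) - 1)
          / ((1 + γ) ^ (n - 1) * (γ * ((n : ℝ) - 1) - 1) + 1)) ^ ((1 : ℝ) - 1 / n))
      Filter.atTop (nhds 1) := by
  have hn0 : n ≠ 0 := by omega
  have hnR : (2:ℝ) ≤ (n:ℝ) := by exact_mod_cast hn
  have hm : (0:ℝ) < (n:ℝ) - 1 := by linarith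
  have h1 : Tendsto (fun γ : ℝ => γ / ((1 + γ) ^ n - 1) ^ ((1:ℝ)/n)) atTop (nhds 1) := by
    have h0 : Tendsto (fun γ : ℝ => 1/γ) atTop (nhds 0) := by
      simpa using tendsto_inv_atTop_zero
    have hc : Tendsto (fun γ : ℝ => (1 + 1/γ)^n - (1/γ)^n) atTop (nhds 1) := by
      have hcont : ContinuousAt (fun x : ℝ => (1 + x)^n - x^n) 0 := by fun_prop
      have := hcont.tendsto.comp h0
      simpa [Function.comp_def, hn0] using this
    have hr : Tendsto (fun γ : ℝ => (((1 + 1/γ)^n - (1/γ)^n) ^ ((1:ℝ)/n))⁻¹)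
        atTop (nhds 1) := by
      have := (hc.rpow_const (p := (1:ℝ)/n) (Or.inl one_ne_zero)).inv₀ (by simp)
      simpa using this
    refine hr.congr' ?_
    filter_upwards [eventually_ge_atTop (1:ℝ)] with γ hγ
    have hγ0 : (0:ℝ) < γ := by linarith
    have hge : (1:ℝ) ≤ (1+γ)^n := one_le_pow₀ (by linarith)
    have heq : (1 + 1/γ)^n - (1/γ)^n = ((1+γ)^n - 1) / γ^n := by
      rw [one_add_div hγ0.ne', div_pow, div_pow, one_pow, div_sub_div_same, add_comm γ 1]
    rw [heq, Real.div_rpow (by linarith) (by positivity)]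
    have hgn : ((γ:ℝ)^n) ^ ((1:ℝ)/n) = γ := by
      rw [← Real.rpow_natCast γ n, ← Real.rpow_mul hγ0.le, mul_one_div,
        div_self (by exact_mod_cast hn0 : (n:ℝ) ≠ 0), Real.rpow_one]
    rw [hgn, inv_div]
  have h2 : Tendsto (fun γ : ℝ =>
      ((1 + γ) ^ (n-1) * γ * ((n:ℝ) - 1)
        / ((1 + γ) ^ (n-1) * (γ * ((n:ℝ) - 1) - 1) + 1)) ^ ((1:ℝ) - 1/n))
      atTop (nhds 1) := by
    have hA : Tendsto (fun γ : ℝ => γ * ((n:ℝ)-1)) atTop atTop :=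
      Tendsto.atTop_mul_const hm tendsto_id
    have hB : Tendsto (fun γ : ℝ => (1+γ)^(n-1) * γ * ((n:ℝ)-1)) atTop atTop := by
      have hp : Tendsto (fun γ : ℝ => (1+γ)^(n-1)) atTop atTop :=
        (tendsto_pow_atTop (by omega)).comp (tendsto_atTop_add_const_left _ 1 tendsto_id)
      exact ((hp.atTop_mul_atTop₀ tendsto_id).atTop_mul_const hm)
    have hv : Tendsto (fun γ : ℝ =>
        1 - (γ * ((n:ℝ)-1))⁻¹ + ((1+γ)^(n-1) * γ * ((n:ℝ)-1))⁻¹) atTop (nhds 1) := by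
      have := ((tendsto_const_nhds (x := (1:ℝ))).sub hA.inv_tendsto_atTop).add hB.inv_tendsto_atTop
      simpa using this
    have hv1 : Tendsto (fun γ : ℝ =>
        (1 - (γ * ((n:ℝ)-1))⁻¹ + ((1+γ)^(n-1) * γ * ((n:ℝ)-1))⁻¹)⁻¹) atTop (nhds 1) := by
      simpa using hv.inv₀ one_ne_zero
    have hfin := hv1.rpow_const (p := (1:ℝ) - 1/n) (Or.inl one_ne_zero)
    rw [Real.one_rpow] at hfin
    refine hfin.congr' ?_
    filter_upwards [eventually_ge_atTop (1:ℝ)] with γ hγ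
    have hγ0 : (0:ℝ) < γ := by linarith
    have hp0 : (0:ℝ) < (1+γ)^(n-1) := by positivity
    congr 1
    rw [show 1 - (γ * ((n:ℝ)-1))⁻¹ + ((1+γ)^(n-1) * γ * ((n:ℝ)-1))⁻¹
        = ((1+γ)^(n-1) * (γ * ((n:ℝ)-1) - 1) + 1) / ((1+γ)^(n-1) * γ * ((n:ℝ)-1)) from by
      field_simp, inv_div]
  have := h1.mul h2
  rw [one_mul] at this
  exact this
end
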